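/- arXiv:1904.00500 — 2 statements merged into one kernel-verified Lean document; each statement's English description precedes it below -/
import Mathlib

section
/- Let μ < 0, σ, r, ν < 0, k > 0 satisfy (1/2)σ²ν² + μν − r < 0, and let γ₋ = (−μ − √(μ² + 2rσ²))/σ² and β = r − μν − (1/2)σ²ν². Suppose kβγ₋/(ν(ν − γ₋)) > 0 and set θ = (1/ν)·ln(kβγ₋/(ν(ν − γ₋))). Then with (Rπ)(x) = 1/r − exp(νx)/β and φ(x) = exp(γ₋x), the value θ satisfies the smooth-pasting system: there exists A with k = (Rπ)'(θ) + Aφ'(θ) and 0 = (Rπ)''(θ) + Aφ''(θ). -/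
open Real

theorem smooth_pasting_example1
    (μ σ r ν k β γm θ : ℝ)
    (hμ : μ < 0) (hσ : 0 < σ) (hr : 0 < r) (hν : ν < 0) (hk : 0 < k)
    (hcond : (1 / 2) * σ ^ 2 * ν ^ 2 + μ * ν - r < 0)
    (hγm : γm = (-μ - Real.sqrt (μ ^ 2 + 2 * r * σ ^ 2)) / σ ^ 2)
    (hβ : β = r - μ * ν - (1 / 2) * σ ^ 2 * ν ^ 2)
    (harg : 0 < k * β * γm / (ν * (ν - γm)))
    (hθ : θ = (1 / ν) * Real.log (k * β * γm / (ν * (ν - γm))))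
    (Rπ φ : ℝ → ℝ)
    (hRπ : Rπ = fun x => 1 / r - Real.exp (ν * x) / β)
    (hφ : φ = fun x => Real.exp (γm * x)) :
    ∃ A : ℝ, k = deriv Rπ θ + A * deriv φ θ ∧
      0 = deriv (deriv Rπ) θ + A * deriv (deriv φ) θ := by
  have hβpos : 0 < β := by nlinarith
  have hβne : β ≠ 0 := ne_of_gt hβpos
  have hnn : (0:ℝ) ≤ μ ^ 2 + 2 * r * σ ^ 2 := by nlinarith
  have hsq : -μ < Real.sqrt (μ ^ 2 + 2 * r * σ ^ 2) := by
    by_contra h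
    push_neg at h
    have h2 : Real.sqrt (μ ^ 2 + 2 * r * σ ^ 2) ^ 2 ≤ (-μ) ^ 2 :=
      pow_le_pow_left₀ (Real.sqrt_nonneg _) h 2
    rw [Real.sq_sqrt hnn] at h2
    nlinarith [mul_pos hr (pow_pos hσ 2)]
  have hγneg : γm < 0 := by
    rw [hγm]
    apply div_neg_of_neg_of_pos
    · linarith
    · positivity
  have hγne : γm ≠ 0 := ne_of_lt hγneg
  have hνne : ν ≠ 0 := ne_of_lt hν
  have hdenne : ν * (ν - γm) ≠ 0 := by
    intro h
    rw [h, div_zero] at harg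
    exact lt_irrefl 0 harg
  have hνγne : ν - γm ≠ 0 := fun h => hdenne (by rw [h, mul_zero])
  have hexp : Real.exp (ν * θ) = k * β * γm / (ν * (ν - γm)) := by
    rw [hθ, show ν * (1 / ν * Real.log (k * β * γm / (ν * (ν - γm)))) =
      Real.log (k * β * γm / (ν * (ν - γm))) by field_simp]
    exact Real.exp_log harg
  have hlin : ∀ x : ℝ, HasDerivAt (fun x => ν * x) ν x := fun x => by
    simpa using (hasDerivAt_id x).const_mul ν
  have hlin2 : ∀ x : ℝ, HasDerivAt (fun x => γm * x) γm x := fun x => by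
    simpa using (hasDerivAt_id x).const_mul γm
  have hd1 : deriv Rπ = fun x => -(Real.exp (ν * x) * ν / β) := by
    funext x
    rw [hRπ]
    exact ((((hlin x).exp).div_const β).const_sub (1 / r)).deriv
  have hd2 : deriv (deriv Rπ) = fun x => -(Real.exp (ν * x) * ν * ν / β) := by
    rw [hd1]
    funext x
    exact (((((hlin x).exp).mul_const ν).div_const β).neg).deriv
  have hp1 : deriv φ = fun x => Real.exp (γm * x) * γm := by
    funext x
    rw [hφ]
    exact ((hlin2 x).exp).deriv
  have hp2 : deriv (deriv φ) = fun x => Real.exp (γm * x) * γm * γm := by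
    rw [hp1]
    funext x
    exact (((hlin2 x).exp).mul_const γm).deriv
  refine ⟨Real.exp (ν * θ) * ν * ν / (β * (Real.exp (γm * θ) * γm * γm)), ?_, ?_⟩
  · rw [hd1, hp1]
    simp only
    have hEγ : Real.exp (γm * θ) ≠ 0 := (Real.exp_pos _).ne'
    field_simp
    rw [hexp]
    field_simp
    ring
  · rw [hd2, hp2]
    simp only
    have hEγ : Real.exp (γm * θ) ≠ 0 := (Real.exp_pos _).ne'
    field_simp
    ring
end

section
/- Let V : ℝ → ℝ be defined piecewise by V(x) = k(x − θ) + V₀ for x < θ and V(x) = A·exp(γ₋x) + 1/r − exp(νx)/β for x ≥ θ, where V₀ = A·exp(γ₋θ) + 1/r − exp(νθ)/β. If A·γ₋·exp(γ₋θ) − (ν/β)exp(νθ) = k and A·γ₋²·exp(γ₋θ) − (ν²/β)exp(νθ) = 0, then V is twice continuously differentiable on ℝ. -/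
/-! Both branches of `V` are smooth, and a function glued at `θ` from two `C²` branches is `C²`
as soon as the values and the first two derivatives of the branches agree at `θ`. The values
agree by the choice of `V₀`; the two fit conditions say that the first derivatives are both `k`
and the second derivatives are both `0`. -/

open Real Set

section Gluing

variable {θ : ℝ} {f g f' g' : ℝ → ℝ}

theorem hasDerivAt_ite_lt (hf : ∀ x, HasDerivAt f (f' x) x) (hg : ∀ x, HasDerivAt g (g' x) x)
    (hval : f θ = g θ) (hderiv : f' θ = g' θ) (x : ℝ) :
    HasDerivAt (fun y => if y < θ then f y else g y) (if x < θ then f' x else g' x) x := by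
  rcases lt_trichotomy x θ with hx | rfl | hx
  · rw [if_pos hx]
    refine (hf x).congr_of_eventuallyEq ?_
    filter_upwards [Iio_mem_nhds hx] with y hy
    exact if_pos hy
  · rw [if_neg (lt_irrefl x)]
    have hleft : HasDerivWithinAt (fun y => if y < x then f y else g y) (g' x) (Iic x) x := by
      refine (hderiv ▸ hf x).hasDerivWithinAt.congr (fun y hy => ?_) (by simp [hval])
      rcases (mem_Iic.mp hy).lt_or_eq with hy | rfl
      · rw [if_pos hy]
      · simp [hval]
    have hright : HasDerivWithinAt (fun y => if y < x then f y else g y) (g' x) (Ici x) x :=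
      (hg x).hasDerivWithinAt.congr (fun y hy => if_neg (not_lt.mpr hy)) (if_neg (lt_irrefl x))
    simpa only [Iic_union_Ici, hasDerivWithinAt_univ] using hleft.union hright
  · rw [if_neg (not_lt.mpr hx.le)]
    refine (hg x).congr_of_eventuallyEq ?_
    filter_upwards [Ioi_mem_nhds hx] with y hy
    exact if_neg (not_lt.mpr (le_of_lt hy))

theorem continuous_ite_lt (hf : Continuous f) (hg : Continuous g) (hval : f θ = g θ) :
    Continuous fun x => if x < θ then f x else g x := by
  have h := Continuous.if_le hg hf continuous_const continuous_id fun x (hx : θ = x) => by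
    subst hx; exact hval.symm
  refine h.congr fun x => ?_
  by_cases hx : x < θ <;> simp [hx, not_le.mpr, le_of_not_gt]

end Gluing

theorem contDiff_two_of_hasDerivAt {f f' f'' : ℝ → ℝ} (hf : ∀ x, HasDerivAt f (f' x) x)
    (hf' : ∀ x, HasDerivAt f' (f'' x) x) (hf'' : Continuous f'') : ContDiff ℝ 2 f := by
  have hderiv : deriv f = f' := funext fun x => (hf x).deriv
  have hderiv' : deriv f' = f'' := funext fun x => (hf' x).deriv
  have hC1 : ContDiff ℝ 1 f' := by
    rw [contDiff_one_iff_deriv, hderiv']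
    exact ⟨fun x => (hf' x).differentiableAt, hf''⟩
  rw [show (2 : WithTop ℕ∞) = 1 + 1 by norm_num, contDiff_succ_iff_deriv, hderiv]
  exact ⟨fun x => (hf x).differentiableAt, by simp, hC1⟩

theorem contDiff_two_ite_lt {θ : ℝ} {f f' f'' g g' g'' : ℝ → ℝ}
    (hf : ∀ x, HasDerivAt f (f' x) x) (hf' : ∀ x, HasDerivAt f' (f'' x) x)
    (hg : ∀ x, HasDerivAt g (g' x) x) (hg' : ∀ x, HasDerivAt g' (g'' x) x)
    (hf'' : Continuous f'') (hg'' : Continuous g'')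
    (hval : f θ = g θ) (hderiv : f' θ = g' θ) (hderiv2 : f'' θ = g'' θ) :
    ContDiff ℝ 2 fun x => if x < θ then f x else g x :=
  contDiff_two_of_hasDerivAt (hasDerivAt_ite_lt hf hg hval hderiv)
    (hasDerivAt_ite_lt hf' hg' hderiv hderiv2) (continuous_ite_lt hf'' hg'' hderiv2)

theorem hasDerivAt_exp_const_mul (c x : ℝ) :
    HasDerivAt (fun x => exp (c * x)) (c * exp (c * x)) x := by
  simpa [mul_comm] using ((hasDerivAt_id x).const_mul c).exp

theorem value_function_C2_general
    (r β ν γm k θ A : ℝ)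
    (V₀ : ℝ) (hV₀ : V₀ = A * Real.exp (γm * θ) + 1 / r - Real.exp (ν * θ) / β)
    (V : ℝ → ℝ)
    (hV : V = fun x => if x < θ then k * (x - θ) + V₀
      else A * Real.exp (γm * x) + 1 / r - Real.exp (ν * x) / β)
    (hfit1 : A * γm * Real.exp (γm * θ) - (ν / β) * Real.exp (ν * θ) = k)
    (hfit2 : A * γm ^ 2 * Real.exp (γm * θ) - (ν ^ 2 / β) * Real.exp (ν * θ) = 0) :
    ContDiff ℝ 2 V := by
  subst hV
  have hlinear (x : ℝ) : HasDerivAt (fun y => k * (y - θ) + V₀) k x := by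
    simpa using (((hasDerivAt_id x).sub_const θ).const_mul k).add_const V₀
  have hexp (x : ℝ) : HasDerivAt (fun y => A * exp (γm * y) + 1 / r - exp (ν * y) / β)
      (A * γm * exp (γm * x) - ν / β * exp (ν * x)) x := by
    refine ((((hasDerivAt_exp_const_mul γm x).const_mul A).add_const (1 / r)).sub
      ((hasDerivAt_exp_const_mul ν x).div_const β)).congr_deriv ?_
    ring
  have hexp' (x : ℝ) : HasDerivAt (fun y => A * γm * exp (γm * y) - ν / β * exp (ν * y))
      (A * γm ^ 2 * exp (γm * x) - ν ^ 2 / β * exp (ν * x)) x := by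
    refine (((hasDerivAt_exp_const_mul γm x).const_mul (A * γm)).sub
      ((hasDerivAt_exp_const_mul ν x).const_mul (ν / β))).congr_deriv ?_
    ring
  exact contDiff_two_ite_lt (f'' := fun _ => 0) hlinear (fun x => hasDerivAt_const x k) hexp hexp'
    continuous_const (by fun_prop) (by simp [hV₀]) hfit1.symm hfit2.symm

theorem value_function_C2
    (r β ν γm k θ A : ℝ)
    (hr : 0 < r) (hβ : 0 < β) (hν : ν < 0) (hγm : γm < 0) (hk : 0 < k)
    (V₀ : ℝ) (hV₀ : V₀ = A * Real.exp (γm * θ) + 1 / r - Real.exp (ν * θ) / β)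
    (V : ℝ → ℝ)
    (hV : V = fun x => if x < θ then k * (x - θ) + V₀
      else A * Real.exp (γm * x) + 1 / r - Real.exp (ν * x) / β)
    (hfit1 : A * γm * Real.exp (γm * θ) - (ν / β) * Real.exp (ν * θ) = k)
    (hfit2 : A * γm ^ 2 * Real.exp (γm * θ) - (ν ^ 2 / β) * Real.exp (ν * θ) = 0) :
    ContDiff ℝ 2 V :=
  value_function_C2_general r β ν γm k θ A V₀ hV₀ V hV hfit1 hfit2
end
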